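/- With the I-derivative ∇^{I;a,b}_V as in (3.14), one has the consistency I^{b,c}_y ∘ ∇^{I;a,b}_V = ∇^{I;a,c}_V, and consequently ∇^{I;b,c}_V ∘ ∇^{I;a,b}_W ≡ 0. -/

import Mathlib

/-- The derivative `∇^{I;a,b}_V` of equation (3.14), obtained by differentiating the
transport along the flow `ε ↦ x + ε·V(x)` of the vector field `V`. -/
noncomputable def nablaI {Λ H E : Type*} [NormedAddCommGroup H] [NormedSpace ℝ H]
    [NormedAddCommGroup E] [NormedSpace ℝ E]
    (I : Λ → Λ → H → H → E → E) (a b : Λ) (V : H → H) (T : H → E) (x z : H) : E :=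
  deriv (fun ε : ℝ => I a b (x + ε • V x) z (T (x + ε • V x))) 0

section

variable {Λ H E : Type*} [NormedAddCommGroup H] [NormedSpace ℝ H]
  [NormedAddCommGroup E] [NormedSpace ℝ E]

/-- Differentiating at `ε = 0` commutes with the continuous linear map `I^{b,c}_{y,z}`, and
the composition law turns `I^{b,c}_{y,z} ∘ I^{a,b}_{x_ε,y}` into `I^{a,c}_{x_ε,z}`. -/
theorem transport_nablaI (I : Λ → Λ → H → H → E → E)
    (hcomp : ∀ (a b c : Λ) (x y z : H) (v : E), I b c y z (I a b x y v) = I a c x z v)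
    {a b c : Λ} {y z : H} (hlin : IsBoundedLinearMap ℝ (I b c y z)) (V : H → H) (T : H → E)
    {x : H} (hdiff : DifferentiableAt ℝ
      (fun ε : ℝ => I a b (x + ε • V x) y (T (x + ε • V x))) 0) :
    I b c y z (nablaI I a b V T x y) = nablaI I a c V T x z := by
  let L := hlin.toContinuousLinearMap
  have hL_apply : ∀ v, L v = I b c y z v := fun _ => rfl
  have hL := L.hasFDerivAt.comp_hasDerivAt 0 hdiff.hasDerivAt
  simp only [Function.comp_def, hL_apply, hcomp] at hL
  exact hL.deriv.symm

theorem nablaI_eq_zero_of_transport_const (I : Λ → Λ → H → H → E → E) {b c : Λ}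
    (V : H → H) {S : H → E} {z : H} (w : E) (x : H) (hS : ∀ y, I b c y z (S y) = w) :
    nablaI I b c V S x z = 0 := by
  simp only [nablaI, hS, deriv_const]

end

theorem nablaI_consistent_and_square_zero_general {Λ H E : Type*}
    [NormedAddCommGroup H] [NormedSpace ℝ H] [NormedAddCommGroup E] [NormedSpace ℝ E]
    (I : Λ → Λ → H → H → E → E)
    (hcomp : ∀ (a b c : Λ) (x y z : H) (v : E), I b c y z (I a b x y v) = I a c x z v)
    -- linearity (3.11) and continuity of the C¹ transports
    (hlin : ∀ (a b : Λ) (x y : H), IsBoundedLinearMap ℝ (I a b x y))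
    (V W : H → H) (a b c : Λ) (T : H → E)
    -- C¹ smoothness of the transports and of the section along the flows of `V` and `W`
    (hdiffV : ∀ x z : H,
      DifferentiableAt ℝ (fun ε : ℝ => I a b (x + ε • V x) z (T (x + ε • V x))) 0)
    (hdiffW : ∀ x z : H,
      DifferentiableAt ℝ (fun ε : ℝ => I a b (x + ε • W x) z (T (x + ε • W x))) 0) :
    -- (3.17): `I^{b,c}_y ∘ ∇^{I;a,b}_V = ∇^{I;a,c}_V`
    (∀ x y z : H, I b c y z (nablaI I a b V T x y) = nablaI I a c V T x z) ∧
    -- (3.16): `∇^{I;b,c}_V ∘ ∇^{I;a,b}_W ≡ 0`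
    (∀ x x' z : H, nablaI I b c V (fun y => nablaI I a b W T x y) x' z = 0) := by
  refine ⟨fun x y z => transport_nablaI I hcomp (hlin b c y z) V T (hdiffV x y), ?_⟩
  intro x x' z
  -- by (3.17) for `W`, transporting `y ↦ ∇^{I;a,b}_W T x y` to `z` gives a value independent of `y`
  exact nablaI_eq_zero_of_transport_const I V (nablaI I a c W T x z) x' fun y =>
    transport_nablaI I hcomp (hlin b c y z) W T (hdiffW x y)

/-- Equations (3.17) and (3.16) of Proposition 3.3: `I^{b,c}_y ∘ ∇^{I;a,b}_V = ∇^{I;a,c}_V`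
(consistency), and consequently `∇^{I;b,c}_V ∘ ∇^{I;a,b}_W ≡ 0`. -/
theorem nablaI_consistent_and_square_zero {Λ H E : Type*}
    [NormedAddCommGroup H] [NormedSpace ℝ H] [NormedAddCommGroup E] [NormedSpace ℝ E]
    (I : Λ → Λ → H → H → E → E)
    (hcomp : ∀ (a b c : Λ) (x y z : H) (v : E), I b c y z (I a b x y v) = I a c x z v)
    (hid : ∀ (a : Λ) (x : H) (v : E), I a a x x v = v)
    -- linearity (3.11) and continuity of the C¹ transports
    (hlin : ∀ (a b : Λ) (x y : H), IsBoundedLinearMap ℝ (I a b x y))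
    (V W : H → H) (a b c : Λ) (T : H → E)
    -- C¹ smoothness of the transports and of the section along the flows of `V` and `W`
    (hdiffV : ∀ x z : H,
      DifferentiableAt ℝ (fun ε : ℝ => I a b (x + ε • V x) z (T (x + ε • V x))) 0)
    (hdiffW : ∀ x z : H,
      DifferentiableAt ℝ (fun ε : ℝ => I a b (x + ε • W x) z (T (x + ε • W x))) 0) :
    -- (3.17): `I^{b,c}_y ∘ ∇^{I;a,b}_V = ∇^{I;a,c}_V`
    (∀ x y z : H, I b c y z (nablaI I a b V T x y) = nablaI I a c V T x z) ∧
    -- (3.16): `∇^{I;b,c}_V ∘ ∇^{I;a,b}_W ≡ 0`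
    (∀ x x' z : H, nablaI I b c V (fun y => nablaI I a b W T x y) x' z = 0) :=
  nablaI_consistent_and_square_zero_general I hcomp hlin V W a b c T hdiffV hdiffW
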